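/- arXiv:1909.07961 — 4 statements merged into one kernel-verified Lean document; each statement's English description precedes it below -/
import Mathlib

section
/- Let d ≥ 1, 0 ≤ S ≤ T ≤ 1, ε > 0 and C > 0. Let A : [S,T]_≤ → ℝ^d be continuous and suppose that |δA_{s,u,t}| ≤ C·|t−s|^{1+ε} for all S ≤ s ≤ u ≤ t ≤ T. Then there exists a unique function 𝒜 : [S,T] → ℝ^d with 𝒜_S = 0 such that for some constant K > 0 one has |𝒜_t − 𝒜_s − A_{s,t}| ≤ K·|t−s|^{1+ε} for all (s,t) ∈ [S,T]_≤. Moreover, there exists a constant K₀ depending only on ε and d such that this 𝒜 satisfies the above bound with K ≤ K₀·C. -/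
/-!
Refining a partition cell by cell changes the Riemann sum of `A` by one `δA` per cell, so along
dyadic refinements of a partition of `[s, t]` with cells of length at most `h` the Riemann sums
move by at most `C (t - s) h^ε` per step, a geometric series. For the dyadic partitions of
`[s, t]` itself the limit is within `C (t - s)^(1+ε) / (1 - 2^(-ε))` of `A_{s,t}`, but it is not
visibly additive in `(s, t)`. The dyadic partitions of the fixed window `[S, T]`, clamped to
`[s, t]`, give instead a limit `Ξ` that is exactly additive (inserting a point `u` costs one `δA`
per cell) and satisfies the weaker bound `‖Ξ_{s,t} - A_{s,t}‖ ≲ (t - s)^(1+ε/2)`. Summing that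
superlinear bound over the dyadic cells of `[s, t]` shows that both limits agree, and
`𝒜_t := Ξ_{S,t}` is the sewing. Uniqueness: a function with superlinear increments is constant.
-/

open Set Finset Filter Topology

namespace Sewing

lemma sum_range_two_mul {M : Type*} [AddCommMonoid M] (f : ℕ → M) (N : ℕ) :
    ∑ i ∈ range (2 * N), f i = ∑ i ∈ range N, (f (2 * i) + f (2 * i + 1)) := by
  induction N with
  | zero => simp
  | succ N ih =>
    rw [mul_add, mul_one, sum_range_succ, sum_range_succ, sum_range_succ, ih, add_assoc]

lemma sum_rpow_sub_le {y : ℕ → ℝ} {N : ℕ} {M ε : ℝ} (hε : 0 ≤ ε)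
    (hy : ∀ i < N, 0 ≤ y (i + 1) - y i ∧ y (i + 1) - y i ≤ M) :
    ∑ i ∈ range N, (y (i + 1) - y i) ^ (1 + ε) ≤ M ^ ε * (y N - y 0) := by
  calc ∑ i ∈ range N, (y (i + 1) - y i) ^ (1 + ε)
      ≤ ∑ i ∈ range N, M ^ ε * (y (i + 1) - y i) := by
        refine sum_le_sum fun i hi => ?_
        obtain ⟨h0, hM⟩ := hy i (mem_range.mp hi)
        rw [Real.rpow_one_add' h0 (by positivity), mul_comm]
        gcongr
    _ = M ^ ε * (y N - y 0) := by rw [← mul_sum, sum_range_sub]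

lemma inv_two_rpow_lt_one {θ : ℝ} (hθ : 0 < θ) : ((2 : ℝ) ^ θ)⁻¹ < 1 :=
  inv_lt_one_of_one_lt₀ (Real.one_lt_rpow one_lt_two hθ)

lemma div_two_pow_rpow {x : ℝ} (hx : 0 ≤ x) (θ : ℝ) (n : ℕ) :
    (x / 2 ^ n) ^ θ = x ^ θ * ((2 : ℝ) ^ θ)⁻¹ ^ n := by
  rw [Real.div_rpow hx (by positivity), div_eq_mul_inv, inv_pow, ← Real.rpow_pow_comm zero_le_two]

lemma tendsto_div_two_pow_rpow {x θ : ℝ} (hx : 0 ≤ x) (hθ : 0 < θ) :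
    Tendsto (fun n : ℕ => (x / 2 ^ n) ^ θ) atTop (𝓝 0) := by
  simp_rw [div_two_pow_rpow hx]
  simpa using (tendsto_pow_atTop_nhds_zero_of_lt_one (by positivity)
    (inv_two_rpow_lt_one hθ)).const_mul (x ^ θ)

def clamp (s t x : ℝ) : ℝ := max s (min x t)

section clamp

variable {s t u x y : ℝ}

lemma le_clamp : s ≤ clamp s t x := le_max_left _ _

lemma clamp_le (hst : s ≤ t) : clamp s t x ≤ t := max_le hst (min_le_right _ _)

lemma clamp_mono (hxy : x ≤ y) : clamp s t x ≤ clamp s t y :=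
  max_le_max le_rfl (min_le_min_right _ hxy)

lemma clamp_sub_clamp_le (hxy : x ≤ y) : clamp s t y - clamp s t x ≤ y - x := by
  simp only [clamp, max_def, min_def]; split_ifs <;> linarith

lemma clamp_of_le (hxs : x ≤ s) : clamp s t x = s := by
  simp only [clamp, max_def, min_def]; split_ifs <;> linarith

lemma clamp_of_ge (hst : s ≤ t) (htx : t ≤ x) : clamp s t x = t := by
  simp only [clamp, max_def, min_def]; split_ifs <;> linarith

lemma clamp_of_mem (hsx : s ≤ x) (hxt : x ≤ t) : clamp s t x = x := by
  simp only [clamp, max_def, min_def]; split_ifs <;> linarith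

lemma min_clamp (hsu : s ≤ u) (hut : u ≤ t) : min (clamp s t x) u = clamp s u x := by
  simp only [clamp, max_def, min_def]; split_ifs <;> linarith

lemma max_clamp (hsu : s ≤ u) (hut : u ≤ t) : max (clamp s t x) u = clamp u t x := by
  simp only [clamp, max_def, min_def]; split_ifs <;> linarith

end clamp

noncomputable def dyadicPt (a b : ℝ) (n i : ℕ) : ℝ := a + i * (b - a) / 2 ^ n

section dyadicPt

variable {a b : ℝ} {n i : ℕ}

@[simp] lemma dyadicPt_zero : dyadicPt a b n 0 = a := by simp [dyadicPt]

@[simp] lemma dyadicPt_two_pow : dyadicPt a b n (2 ^ n) = b := by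
  simp [dyadicPt]

lemma dyadicPt_succ_sub : dyadicPt a b n (i + 1) - dyadicPt a b n i = (b - a) / 2 ^ n := by
  simp only [dyadicPt]; push_cast; ring

lemma dyadicPt_succ_two_mul : dyadicPt a b (n + 1) (2 * i) = dyadicPt a b n i := by
  simp only [dyadicPt]; push_cast; field_simp; ring

lemma dyadicPt_le_succ (hab : a ≤ b) : dyadicPt a b n i ≤ dyadicPt a b n (i + 1) := by
  have := dyadicPt_succ_sub (a := a) (b := b) (n := n) (i := i)
  have : 0 ≤ (b - a) / 2 ^ n := div_nonneg (sub_nonneg.mpr hab) (by positivity)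
  linarith

lemma dyadicPt_mem (hab : a ≤ b) (hi : i ≤ 2 ^ n) : dyadicPt a b n i ∈ Icc a b := by
  have hi' : (i : ℝ) ≤ 2 ^ n := by exact_mod_cast hi
  have h0 : 0 ≤ b - a := sub_nonneg.mpr hab
  have hle : i * (b - a) / 2 ^ n ≤ b - a := by
    rw [div_le_iff₀ (by positivity)]; nlinarith
  have hge : 0 ≤ i * (b - a) / 2 ^ n := by positivity
  simp only [dyadicPt, Set.mem_Icc]
  constructor <;> linarith

end dyadicPt

variable {E : Type*} [NormedAddCommGroup E]

def DeltaBound (A : ℝ → ℝ → E) (S T C ε : ℝ) : Prop :=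
  ∀ s u t : ℝ, S ≤ s → s ≤ u → u ≤ t → t ≤ T → ‖A s t - A s u - A u t‖ ≤ C * (t - s) ^ (1 + ε)

/-- The Riemann sum of `A` along the `n`-th dyadic partition of the window `[a, b]`, with the
partition points clamped to `[s, t]`; for `[a, b] = [s, t]` it is the plain dyadic Riemann sum. -/
noncomputable def dyadicSum (A : ℝ → ℝ → E) (a b s t : ℝ) (n : ℕ) : E :=
  ∑ i ∈ range (2 ^ n), A (clamp s t (dyadicPt a b n i)) (clamp s t (dyadicPt a b n (i + 1)))

section germ

variable {A : ℝ → ℝ → E} {S T C ε a b s u t : ℝ}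

lemma DeltaBound.apply_self (hA : DeltaBound A S T C ε) (hε : 0 < 1 + ε) (hSs : S ≤ s)
    (hsT : s ≤ T) : A s s = 0 := by
  have h := hA s s s hSs le_rfl le_rfl hsT
  rwa [sub_self, sub_self, Real.zero_rpow hε.ne', mul_zero, zero_sub, norm_neg,
    norm_le_zero_iff] at h

lemma DeltaBound.norm_sub_min_max_le (hA : DeltaBound A S T C ε) (hC : 0 ≤ C) (hε : 0 < 1 + ε)
    {p r : ℝ} (hSp : S ≤ p) (hpr : p ≤ r) (hrT : r ≤ T) (hSu : S ≤ u) (huT : u ≤ T) :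
    ‖A p r - (A (min p u) (min r u) + A (max p u) (max r u))‖ ≤ C * (r - p) ^ (1 + ε) := by
  have hA0 := hA.apply_self hε hSu huT
  have hpos : 0 ≤ C * (r - p) ^ (1 + ε) := mul_nonneg hC (by have := sub_nonneg.mpr hpr; positivity)
  rcases le_total u p with hup | hpu
  · rw [min_eq_right hup, min_eq_right (hup.trans hpr), max_eq_left hup,
      max_eq_left (hup.trans hpr), hA0, zero_add, sub_self, norm_zero]
    exact hpos
  rcases le_total u r with hur | hru
  · rw [min_eq_left hpu, min_eq_right hur, max_eq_right hpu, max_eq_left hur, ← sub_sub]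
    exact hA p u r hSp hpu hur hrT
  · rw [min_eq_left hpu, min_eq_left hru, max_eq_right hpu, max_eq_right hru, hA0, add_zero,
      sub_self, norm_zero]
    exact hpos

lemma clamp_dyadicPt_succ_sub (hab : a ≤ b) (hst : s ≤ t) (n i : ℕ) :
    0 ≤ clamp s t (dyadicPt a b n (i + 1)) - clamp s t (dyadicPt a b n i) ∧
      clamp s t (dyadicPt a b n (i + 1)) - clamp s t (dyadicPt a b n i) ≤
        min ((b - a) / 2 ^ n) (t - s) := by
  have hle := dyadicPt_le_succ (n := n) (i := i) hab
  refine ⟨sub_nonneg.mpr (clamp_mono hle), le_min ?_ ?_⟩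
  · exact (clamp_sub_clamp_le hle).trans dyadicPt_succ_sub.le
  · linarith [clamp_le (x := dyadicPt a b n (i + 1)) hst, le_clamp (s := s) (t := t)
      (x := dyadicPt a b n i)]

lemma sum_clamp_dyadicPt_rpow_le (hε : 0 ≤ ε) (hab : a ≤ b) (hst : s ≤ t) (n : ℕ) :
    ∑ i ∈ range (2 ^ n),
        (clamp s t (dyadicPt a b n (i + 1)) - clamp s t (dyadicPt a b n i)) ^ (1 + ε) ≤
      min ((b - a) / 2 ^ n) (t - s) ^ ε * (t - s) := by
  refine (sum_rpow_sub_le (y := fun i => clamp s t (dyadicPt a b n i)) hε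
    fun i _ => clamp_dyadicPt_succ_sub hab hst n i).trans ?_
  have hM : 0 ≤ min ((b - a) / 2 ^ n) (t - s) :=
    le_min (div_nonneg (sub_nonneg.mpr hab) (by positivity)) (sub_nonneg.mpr hst)
  gcongr
  exacts [clamp_le hst, le_clamp]

lemma DeltaBound.norm_dyadicSum_succ_sub_le (hA : DeltaBound A S T C ε) (hC : 0 ≤ C)
    (hε : 0 ≤ ε) (hSs : S ≤ s) (hst : s ≤ t) (htT : t ≤ T) (hab : a ≤ b) (n : ℕ) :
    ‖dyadicSum A a b s t (n + 1) - dyadicSum A a b s t n‖ ≤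
      C * (min ((b - a) / 2 ^ n) (t - s) ^ ε * (t - s)) := by
  set y : ℕ → ℝ := fun i => clamp s t (dyadicPt a b n i)
  set z : ℕ → ℝ := fun i => clamp s t (dyadicPt a b (n + 1) (2 * i + 1))
  have hsplit : dyadicSum A a b s t (n + 1) - dyadicSum A a b s t n =
      -∑ i ∈ range (2 ^ n), (A (y i) (y (i + 1)) - A (y i) (z i) - A (z i) (y (i + 1))) := by
    rw [dyadicSum, dyadicSum, pow_succ', sum_range_two_mul, ← sum_neg_distrib, ← sum_sub_distrib]
    refine sum_congr rfl fun i _ => ?_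
    rw [show 2 * i + 1 + 1 = 2 * (i + 1) by ring, dyadicPt_succ_two_mul, dyadicPt_succ_two_mul]
    simp only [y, z]
    abel
  have hmid (i : ℕ) : y i ≤ z i ∧ z i ≤ y (i + 1) := by
    have h1 := dyadicPt_le_succ (n := n + 1) (i := 2 * i) hab
    have h2 := dyadicPt_le_succ (n := n + 1) (i := 2 * i + 1) hab
    rw [dyadicPt_succ_two_mul] at h1
    rw [show 2 * i + 1 + 1 = 2 * (i + 1) by ring, dyadicPt_succ_two_mul] at h2
    exact ⟨clamp_mono h1, clamp_mono h2⟩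
  rw [hsplit, norm_neg]
  refine (norm_sum_le _ _).trans <| (sum_le_sum fun i _ => ?_).trans <|
    (mul_sum _ _ _).symm.le.trans <|
      mul_le_mul_of_nonneg_left (sum_clamp_dyadicPt_rpow_le hε hab hst n) hC
  exact hA _ _ _ (hSs.trans le_clamp) (hmid i).1 (hmid i).2 ((clamp_le hst).trans htT)

lemma DeltaBound.norm_dyadicSum_sub_add_le (hA : DeltaBound A S T C ε) (hC : 0 ≤ C)
    (hε : 0 ≤ ε) (hSs : S ≤ s) (hsu : s ≤ u) (hut : u ≤ t) (htT : t ≤ T) (hab : a ≤ b)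
    (n : ℕ) :
    ‖dyadicSum A a b s t n - (dyadicSum A a b s u n + dyadicSum A a b u t n)‖ ≤
      C * (((b - a) / 2 ^ n) ^ ε * (t - s)) := by
  have hst := hsu.trans hut
  rw [dyadicSum, dyadicSum, dyadicSum, ← sum_add_distrib, ← sum_sub_distrib]
  simp only [← min_clamp (x := dyadicPt a b n _) hsu hut,
    ← max_clamp (x := dyadicPt a b n _) hsu hut]
  refine (norm_sum_le _ _).trans <| (sum_le_sum fun i _ => ?_).trans <|
    (mul_sum _ _ _).symm.le.trans <| mul_le_mul_of_nonneg_left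
      ((sum_clamp_dyadicPt_rpow_le hε hab hst n).trans ?_) hC
  · exact hA.norm_sub_min_max_le hC (by linarith) (hSs.trans le_clamp)
      (clamp_mono (dyadicPt_le_succ hab)) ((clamp_le hst).trans htT) (hSs.trans hsu)
      (hut.trans htT)
  · have h0 : 0 ≤ min ((b - a) / 2 ^ n) (t - s) :=
      le_min (div_nonneg (sub_nonneg.mpr hab) (by positivity)) (sub_nonneg.mpr hst)
    gcongr
    exact min_le_left _ _

lemma DeltaBound.norm_dyadicSum_succ_sub_le_geometric (hA : DeltaBound A S T C ε) (hC : 0 ≤ C)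
    {θ : ℝ} (hθ : 0 ≤ θ) (hθε : θ ≤ ε) (hSs : S ≤ s) (hst : s ≤ t) (htT : t ≤ T)
    (hab : a ≤ b) (n : ℕ) :
    ‖dyadicSum A a b s t (n + 1) - dyadicSum A a b s t n‖ ≤
      C * (t - s) ^ (1 + (ε - θ)) * (b - a) ^ θ * ((2 : ℝ) ^ θ)⁻¹ ^ n := by
  have hh : 0 ≤ (b - a) / 2 ^ n := div_nonneg (sub_nonneg.mpr hab) (by positivity)
  have hl : 0 ≤ t - s := sub_nonneg.mpr hst
  have hm : 0 ≤ min ((b - a) / 2 ^ n) (t - s) := le_min hh hl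
  have hmin : min ((b - a) / 2 ^ n) (t - s) ^ ε ≤ ((b - a) / 2 ^ n) ^ θ * (t - s) ^ (ε - θ) := by
    calc min ((b - a) / 2 ^ n) (t - s) ^ ε
        = min ((b - a) / 2 ^ n) (t - s) ^ θ * min ((b - a) / 2 ^ n) (t - s) ^ (ε - θ) := by
          rw [← Real.rpow_add_of_nonneg hm hθ (sub_nonneg.mpr hθε), add_sub_cancel]
      _ ≤ ((b - a) / 2 ^ n) ^ θ * (t - s) ^ (ε - θ) := by
          gcongr
          exacts [min_le_left _ _, min_le_right _ _]
  refine (hA.norm_dyadicSum_succ_sub_le hC (hθ.trans hθε) hSs hst htT hab n).trans ?_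
  calc C * (min ((b - a) / 2 ^ n) (t - s) ^ ε * (t - s))
      ≤ C * (((b - a) / 2 ^ n) ^ θ * (t - s) ^ (ε - θ) * (t - s)) := by gcongr
    _ = C * (t - s) ^ (1 + (ε - θ)) * (b - a) ^ θ * ((2 : ℝ) ^ θ)⁻¹ ^ n := by
      rw [div_two_pow_rpow (sub_nonneg.mpr hab), Real.rpow_one_add' hl (by linarith)]
      ring

lemma dyadicSum_zero (has : a ≤ s) (hst : s ≤ t) (htb : t ≤ b) :
    dyadicSum A a b s t 0 = A s t := by
  have h1 : dyadicPt a b 0 1 = b := by simpa using dyadicPt_two_pow (a := a) (b := b) (n := 0)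
  rw [dyadicSum, pow_zero, sum_range_one, zero_add, dyadicPt_zero, h1, clamp_of_le has,
    clamp_of_ge hst htb]

end germ

noncomputable def sewingLimit (A : ℝ → ℝ → E) (a b s t : ℝ) : E :=
  limUnder atTop (dyadicSum A a b s t)

section limit

variable [CompleteSpace E] {A : ℝ → ℝ → E} {S T C ε a b s u t : ℝ}

lemma DeltaBound.tendsto_dyadicSum (hA : DeltaBound A S T C ε) (hC : 0 ≤ C) (hε : 0 < ε)
    (hSs : S ≤ s) (hst : s ≤ t) (htT : t ≤ T) (hab : a ≤ b) :
    Tendsto (dyadicSum A a b s t) atTop (𝓝 (sewingLimit A a b s t)) :=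
  CauchySeq.tendsto_limUnder <| cauchySeq_of_le_geometric _ _ (inv_two_rpow_lt_one hε) fun n => by
    rw [dist_comm, dist_eq_norm]
    exact hA.norm_dyadicSum_succ_sub_le_geometric hC hε.le le_rfl hSs hst htT hab n

lemma DeltaBound.norm_sewingLimit_sub_le (hA : DeltaBound A S T C ε) (hC : 0 ≤ C) {θ : ℝ}
    (hθ : 0 < θ) (hθε : θ ≤ ε) (hSs : S ≤ s) (has : a ≤ s) (hst : s ≤ t) (htb : t ≤ b)
    (htT : t ≤ T) :
    ‖sewingLimit A a b s t - A s t‖ ≤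
      C * (t - s) ^ (1 + (ε - θ)) * (b - a) ^ θ / (1 - ((2 : ℝ) ^ θ)⁻¹) := by
  have hab := has.trans (hst.trans htb)
  have h := dist_le_of_le_geometric_of_tendsto₀ _ _ (inv_two_rpow_lt_one hθ)
    (fun n => by
      rw [dist_comm, dist_eq_norm]
      exact hA.norm_dyadicSum_succ_sub_le_geometric hC hθ.le hθε hSs hst htT hab n)
    (hA.tendsto_dyadicSum hC (hθ.trans_le hθε) hSs hst htT hab)
  rwa [dyadicSum_zero has hst htb, dist_comm, dist_eq_norm] at h

lemma DeltaBound.sewingLimit_add (hA : DeltaBound A S T C ε) (hC : 0 ≤ C) (hε : 0 < ε)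
    (hSs : S ≤ s) (hsu : s ≤ u) (hut : u ≤ t) (htT : t ≤ T) (hab : a ≤ b) :
    sewingLimit A a b s t = sewingLimit A a b s u + sewingLimit A a b u t := by
  have hlim := (hA.tendsto_dyadicSum hC hε hSs (hsu.trans hut) htT hab).sub
    ((hA.tendsto_dyadicSum hC hε hSs hsu (hut.trans htT) hab).add
      (hA.tendsto_dyadicSum hC hε (hSs.trans hsu) hut htT hab))
  have hdefect := squeeze_zero_norm
    (fun n => hA.norm_dyadicSum_sub_add_le hC hε.le hSs hsu hut htT hab n) (by
      simpa using
        ((tendsto_div_two_pow_rpow (sub_nonneg.mpr hab) hε).mul_const (t - s)).const_mul C)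
  exact sub_eq_zero.mp (tendsto_nhds_unique hlim hdefect)

end limit

section superlinear

variable {s t c θ : ℝ}

lemma tendsto_sum_dyadicPt_of_norm_le {F : ℝ → ℝ → E} (hc : 0 ≤ c) (hθ : 0 < θ) (hst : s ≤ t)
    (hF : ∀ x y, s ≤ x → x ≤ y → y ≤ t → ‖F x y‖ ≤ c * (y - x) ^ (1 + θ)) :
    Tendsto (fun n => ∑ i ∈ range (2 ^ n), F (dyadicPt s t n i) (dyadicPt s t n (i + 1)))
      atTop (𝓝 0) := by
  refine squeeze_zero_norm (fun n => ?_) (by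
    simpa using ((tendsto_div_two_pow_rpow (sub_nonneg.mpr hst) hθ).mul_const (t - s)).const_mul c)
  have hstep (i : ℕ) := dyadicPt_succ_sub (a := s) (b := t) (n := n) (i := i)
  have hh : 0 ≤ (t - s) / 2 ^ n := div_nonneg (sub_nonneg.mpr hst) (by positivity)
  refine (norm_sum_le _ _).trans <| (sum_le_sum fun i hi => hF _ _ ?_ ?_ ?_).trans ?_
  · exact (dyadicPt_mem hst (mem_range.mp hi).le).1
  · exact dyadicPt_le_succ hst
  · exact (dyadicPt_mem hst (mem_range.mp hi)).2
  · rw [← mul_sum]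
    refine mul_le_mul_of_nonneg_left ?_ hc
    have := sum_rpow_sub_le (y := fun i => dyadicPt s t n i) (N := 2 ^ n) hθ.le
      fun i _ => ⟨(hstep i).symm ▸ hh, (hstep i).le⟩
    simpa using this

lemma eq_of_norm_sub_le_rpow {f : ℝ → E} (hc : 0 ≤ c) (hθ : 0 < θ) (hst : s ≤ t)
    (hf : ∀ x y, s ≤ x → x ≤ y → y ≤ t → ‖f y - f x‖ ≤ c * (y - x) ^ (1 + θ)) :
    f t = f s := by
  have hsum (n : ℕ) :
      ∑ i ∈ range (2 ^ n), (f (dyadicPt s t n (i + 1)) - f (dyadicPt s t n i)) = f t - f s := by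
    rw [sum_range_sub (fun i => f (dyadicPt s t n i)), dyadicPt_two_pow, dyadicPt_zero]
  have h := tendsto_sum_dyadicPt_of_norm_le (F := fun x y => f y - f x) hc hθ hst hf
  simp only [hsum] at h
  exact sub_eq_zero.mp (tendsto_nhds_unique tendsto_const_nhds h)

end superlinear

section sewing

variable [CompleteSpace E] {A : ℝ → ℝ → E} {S T C ε s t : ℝ}

lemma DeltaBound.sewingLimit_eq_sewingLimit_self (hA : DeltaBound A S T C ε) (hC : 0 ≤ C)
    (hε : 0 < ε) (hSs : S ≤ s) (hst : s ≤ t) (htT : t ≤ T) :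
    sewingLimit A S T s t = sewingLimit A s t s t := by
  have hST : S ≤ T := hSs.trans (hst.trans htT)
  have hadd (x y : ℝ) (hSx : S ≤ x) (hxy : x ≤ y) (hyT : y ≤ T) :
      sewingLimit A S T S y - sewingLimit A S T S x = sewingLimit A S T x y := by
    rw [hA.sewingLimit_add hC hε le_rfl hSx hxy hyT hST, add_sub_cancel_left]
  set Ξ := sewingLimit A S T
  have hF (x y : ℝ) (hsx : s ≤ x) (hxy : x ≤ y) (hyt : y ≤ t) :
      ‖Ξ S y - Ξ S x - A x y‖ ≤
        C * (T - S) ^ (ε / 2) / (1 - ((2 : ℝ) ^ (ε / 2))⁻¹) * (y - x) ^ (1 + ε / 2) := by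
    rw [hadd x y (hSs.trans hsx) hxy (hyt.trans htT)]
    refine (hA.norm_sewingLimit_sub_le hC (half_pos hε) (half_le_self hε.le) (hSs.trans hsx)
      (hSs.trans hsx) hxy (hyt.trans htT) (hyt.trans htT)).trans_eq ?_
    rw [sub_half]
    ring
  have hr := sub_pos.mpr (inv_two_rpow_lt_one (half_pos hε))
  have h := tendsto_sum_dyadicPt_of_norm_le (by positivity) (half_pos hε) hst hF
  have hsum (n : ℕ) : ∑ i ∈ range (2 ^ n), (Ξ S (dyadicPt s t n (i + 1)) -
      Ξ S (dyadicPt s t n i) - A (dyadicPt s t n i) (dyadicPt s t n (i + 1))) =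
      Ξ s t - dyadicSum A s t s t n := by
    rw [sum_sub_distrib, sum_range_sub (fun i => Ξ S (dyadicPt s t n i)), dyadicPt_two_pow,
      dyadicPt_zero, hadd s t hSs hst htT, dyadicSum]
    refine congrArg _ (sum_congr rfl fun i hi => ?_)
    rw [clamp_of_mem (dyadicPt_mem hst (mem_range.mp hi).le).1
        (dyadicPt_mem hst (mem_range.mp hi).le).2,
      clamp_of_mem (dyadicPt_mem hst (mem_range.mp hi)).1 (dyadicPt_mem hst (mem_range.mp hi)).2]
  simp only [hsum] at h
  refine tendsto_nhds_unique ?_ (hA.tendsto_dyadicSum hC hε hSs hst htT hst)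
  simpa using (tendsto_const_nhds (x := Ξ s t)).sub h

lemma DeltaBound.norm_sewingLimit_self_sub_le (hA : DeltaBound A S T C ε) (hC : 0 ≤ C)
    (hε : 0 < ε) (hSs : S ≤ s) (hst : s ≤ t) (htT : t ≤ T) :
    ‖sewingLimit A s t s t - A s t‖ ≤ (1 - ((2 : ℝ) ^ ε)⁻¹)⁻¹ * C * (t - s) ^ (1 + ε) := by
  refine (hA.norm_sewingLimit_sub_le hC hε le_rfl hSs le_rfl hst le_rfl htT).trans_eq ?_
  rw [sub_self, add_zero, Real.rpow_one, Real.rpow_one_add' (sub_nonneg.mpr hst) (by linarith)]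
  ring

theorem DeltaBound.exists_sewing (hA : DeltaBound A S T C ε) (hC : 0 ≤ C) (hε : 0 < ε)
    (hST : S ≤ T) :
    ∃ 𝒜 : ℝ → E, 𝒜 S = 0 ∧ ∀ s t, S ≤ s → s ≤ t → t ≤ T →
      ‖𝒜 t - 𝒜 s - A s t‖ ≤ (1 - ((2 : ℝ) ^ ε)⁻¹)⁻¹ * C * (t - s) ^ (1 + ε) := by
  refine ⟨sewingLimit A S T S, ?_, fun s t hSs hst htT => ?_⟩
  · simpa using hA.sewingLimit_add hC hε le_rfl le_rfl le_rfl hST hST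
  · rw [hA.sewingLimit_add hC hε le_rfl hSs hst htT hST, add_sub_cancel_left,
      hA.sewingLimit_eq_sewingLimit_self hC hε hSs hst htT]
    exact hA.norm_sewingLimit_self_sub_le hC hε hSs hst htT

end sewing

theorem eqOn_of_norm_sub_sub_le {A : ℝ → ℝ → E}
    {𝒜 𝒜' : ℝ → E} {S T K K' θ : ℝ} (hθ : 0 < θ) (hK : 0 ≤ K) (hK' : 0 ≤ K')
    (h0 : 𝒜 S = 𝒜' S)
    (h : ∀ s t, S ≤ s → s ≤ t → t ≤ T → ‖𝒜 t - 𝒜 s - A s t‖ ≤ K * (t - s) ^ (1 + θ))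
    (h' : ∀ s t, S ≤ s → s ≤ t → t ≤ T → ‖𝒜' t - 𝒜' s - A s t‖ ≤ K' * (t - s) ^ (1 + θ)) :
    EqOn 𝒜 𝒜' (Icc S T) := by
  rintro t ⟨hSt, htT⟩
  have h := eq_of_norm_sub_le_rpow (f := 𝒜 - 𝒜') (add_nonneg hK hK') hθ hSt
    fun x y hSx hxy hyt => calc
      ‖(𝒜 - 𝒜') y - (𝒜 - 𝒜') x‖ = ‖(𝒜 y - 𝒜 x - A x y) - (𝒜' y - 𝒜' x - A x y)‖ := by
        congr 1; simp only [Pi.sub_apply]; abel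
      _ ≤ (K + K') * (y - x) ^ (1 + θ) := by
        rw [add_mul]
        exact (norm_sub_le _ _).trans (add_le_add (h x y hSx hxy (hyt.trans htT))
          (h' x y hSx hxy (hyt.trans htT)))
  simpa [h0, sub_eq_zero] using h

end Sewing

open Sewing

theorem stmt_0_general (d : ℕ) (ε : ℝ) (hε : 0 < ε) :
    ∃ K₀ : ℝ, 0 < K₀ ∧
      ∀ (S T : ℝ), 0 ≤ S → S ≤ T → T ≤ 1 →
      ∀ (A : ℝ → ℝ → EuclideanSpace ℝ (Fin d)) (C : ℝ), 0 < C →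
      ContinuousOn (fun q : ℝ × ℝ => A q.1 q.2)
        {q : ℝ × ℝ | S ≤ q.1 ∧ q.1 ≤ q.2 ∧ q.2 ≤ T} →
      (∀ s u t : ℝ, S ≤ s → s ≤ u → u ≤ t → t ≤ T →
        ‖A s t - A s u - A u t‖ ≤ C * (t - s) ^ (1 + ε)) →
      ∃ 𝒜 : ℝ → EuclideanSpace ℝ (Fin d),
        (𝒜 S = 0 ∧
          ∃ K : ℝ, 0 < K ∧ ∀ s t : ℝ, S ≤ s → s ≤ t → t ≤ T →
            ‖𝒜 t - 𝒜 s - A s t‖ ≤ K * (t - s) ^ (1 + ε)) ∧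
        (∀ 𝒜' : ℝ → EuclideanSpace ℝ (Fin d),
          (𝒜' S = 0 ∧
            ∃ K : ℝ, 0 < K ∧ ∀ s t : ℝ, S ≤ s → s ≤ t → t ≤ T →
              ‖𝒜' t - 𝒜' s - A s t‖ ≤ K * (t - s) ^ (1 + ε)) →
          EqOn 𝒜 𝒜' (Icc S T)) ∧
        (∀ s t : ℝ, S ≤ s → s ≤ t → t ≤ T →
          ‖𝒜 t - 𝒜 s - A s t‖ ≤ K₀ * C * (t - s) ^ (1 + ε)) := by
  have hK₀ : 0 < (1 - ((2 : ℝ) ^ ε)⁻¹)⁻¹ := inv_pos.mpr (sub_pos.mpr (inv_two_rpow_lt_one hε))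
  refine ⟨_, hK₀, fun S T _ hST _ A C hC _ hδ => ?_⟩
  obtain ⟨𝒜, h0, hbound⟩ := DeltaBound.exists_sewing hδ hC.le hε hST
  refine ⟨𝒜, ⟨h0, _, mul_pos hK₀ hC, hbound⟩, fun 𝒜' ⟨h0', K', hK', h'⟩ => ?_, hbound⟩
  exact eqOn_of_norm_sub_sub_le hε (mul_pos hK₀ hC).le hK'.le (h0.trans h0'.symm) hbound h'

/-- **Deterministic sewing lemma** (Gubinelli).
For `0 ≤ S ≤ T ≤ 1`, a continuous germ `A` on the triangle `[S,T]_≤` with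
`|δA_{s,u,t}| ≤ C|t-s|^{1+ε}` admits a unique sewing `𝒜` with `𝒜_S = 0` and
`|𝒜_t - 𝒜_s - A_{s,t}| ≤ K|t-s|^{1+ε}`; moreover the bound holds with `K ≤ K₀·C`
for a constant `K₀ = K₀(ε,d)`. -/
theorem stmt_0 (d : ℕ) (hd : 1 ≤ d) (ε : ℝ) (hε : 0 < ε) :
    ∃ K₀ : ℝ, 0 < K₀ ∧
      ∀ (S T : ℝ), 0 ≤ S → S ≤ T → T ≤ 1 →
      ∀ (A : ℝ → ℝ → EuclideanSpace ℝ (Fin d)) (C : ℝ), 0 < C →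
      ContinuousOn (fun q : ℝ × ℝ => A q.1 q.2)
        {q : ℝ × ℝ | S ≤ q.1 ∧ q.1 ≤ q.2 ∧ q.2 ≤ T} →
      (∀ s u t : ℝ, S ≤ s → s ≤ u → u ≤ t → t ≤ T →
        ‖A s t - A s u - A u t‖ ≤ C * (t - s) ^ (1 + ε)) →
      ∃ 𝒜 : ℝ → EuclideanSpace ℝ (Fin d),
        (𝒜 S = 0 ∧
          ∃ K : ℝ, 0 < K ∧ ∀ s t : ℝ, S ≤ s → s ≤ t → t ≤ T →
            ‖𝒜 t - 𝒜 s - A s t‖ ≤ K * (t - s) ^ (1 + ε)) ∧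
        (∀ 𝒜' : ℝ → EuclideanSpace ℝ (Fin d),
          (𝒜' S = 0 ∧
            ∃ K : ℝ, 0 < K ∧ ∀ s t : ℝ, S ≤ s → s ≤ t → t ≤ T →
              ‖𝒜' t - 𝒜' s - A s t‖ ≤ K * (t - s) ^ (1 + ε)) →
          EqOn 𝒜 𝒜' (Icc S T)) ∧
        (∀ s t : ℝ, S ≤ s → s ≤ t → t ≤ T →
          ‖𝒜 t - 𝒜 s - A s t‖ ≤ K₀ * C * (t - s) ^ (1 + ε)) :=
  stmt_0_general d ε hε
end

section
/- Let H ∈ (1/2,1) and ρ ∈ (H − 1/2, 1]. Then there exists a constant N = N(H, ρ) such that for every function f : [0,1] → ℝ^d with [f]_{C^ρ} := sup_{s ≠ t ∈ [0,1]} |f_t − f_s|/|t−s|^ρ < ∞ and every n ∈ ℕ, ∫_0^1 ( ∫_0^t (t/s)^{H−1/2}·|f_{κ_n(t)} − f_{κ_n(s)}|·(t−s)^{−H−1/2} ds )² dt ≤ N·[f]_{C^ρ}². -/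
/-- `κ_n(t) = ⌊nt⌋/n`. -/
noncomputable def kappa (n : ℕ) (t : ℝ) : ℝ := (⌊(n : ℝ) * t⌋ : ℝ) / n

/-!
Fix `t` with `c = κ_n t < t`. The step function `f ∘ κ_n` is constant on `(c, t]`, so the inner
integrand vanishes there, while for `s ≤ c` Hölder continuity gives
`|f_{κ_n t} - f_{κ_n s}| ≤ L ((t - s)^ρ + n^{-ρ})`. Bounding the weight
`(t/s)^{H-1/2} (t-s)^e` separately on `s ≤ t/2` and `s ≥ t/2`, the inner integral is at most
`L (C + A t^{1/2-H} + B n^{-ρ} (t - κ_n t)^{1/2-H})`. After squaring, `t^{1-2H}` is integrable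
because `H < 1`, and `∫_0^1 (t - κ_n t)^{1-2H} dt = n^{2H-1}/(2-2H)` (the fractional part of `nt`
is equidistributed) is compensated by `n^{-2ρ}` because `ρ > H - 1/2`.
-/

open MeasureTheory intervalIntegral Set

lemma intervalIntegral_mono_of_nonneg {f g : ℝ → ℝ} {a b : ℝ} (hab : a ≤ b)
    (hf : ∀ᵐ x, x ∈ Ioc a b → 0 ≤ f x) (hg : IntervalIntegrable g volume a b)
    (hfg : ∀ᵐ x, x ∈ Ioc a b → f x ≤ g x) :
    ∫ x in a..b, f x ≤ ∫ x in a..b, g x := by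
  rw [integral_of_le hab, integral_of_le hab]
  exact integral_mono_of_nonneg ((ae_restrict_iff' measurableSet_Ioc).2 hf) hg.1
    ((ae_restrict_iff' measurableSet_Ioc).2 hfg)

section Kappa

variable {n : ℕ} {s t : ℝ}

lemma sub_kappa_eq (hn : 0 < n) (t : ℝ) : t - kappa n t = Int.fract (n * t) / n := by
  rw [kappa, Int.fract]
  field_simp

lemma kappa_le (hn : 0 < n) (t : ℝ) : kappa n t ≤ t := by
  have h := sub_kappa_eq hn t
  have : 0 ≤ Int.fract ((n : ℝ) * t) / n := by positivity
  linarith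

lemma sub_kappa_lt (hn : 0 < n) (t : ℝ) : t - kappa n t < 1 / n := by
  rw [sub_kappa_eq hn]
  gcongr
  exact Int.fract_lt_one _

lemma kappa_nonneg (ht : 0 ≤ t) : 0 ≤ kappa n t := by
  unfold kappa
  positivity

lemma kappa_mono : Monotone (kappa n) := fun s t hst => by
  unfold kappa
  gcongr

lemma kappa_kappa (hn : 0 < n) (t : ℝ) : kappa n (kappa n t) = kappa n t := by
  have : (n : ℝ) ≠ 0 := by positivity
  simp only [kappa, mul_div_cancel₀ _ this, Int.floor_intCast]

lemma kappa_eq_of_mem_Icc (hn : 0 < n) (hs : s ∈ Icc (kappa n t) t) : kappa n s = kappa n t :=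
  le_antisymm (kappa_mono hs.2) (kappa_kappa hn t ▸ kappa_mono hs.1)

lemma ae_kappa_lt (hn : 0 < n) : ∀ᵐ t, kappa n t < t := by
  have hnull : volume (range fun k : ℤ => (k : ℝ) / n) = 0 := (countable_range _).measure_zero _
  filter_upwards [measure_eq_zero_iff_ae_notMem.mp hnull] with t ht
  exact (kappa_le hn t).lt_of_ne fun h => ht ⟨⌊(n : ℝ) * t⌋, h⟩

end Kappa

section Fract

variable {n : ℕ} {p : ℝ}

lemma intervalIntegrable_fract_rpow (hp : -1 < p) (a b : ℝ) :
    IntervalIntegrable (fun u => Int.fract u ^ p) volume a b := by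
  refine (Int.fract_periodic ℝ).comp (· ^ p) |>.intervalIntegrable₀ one_ne_zero ?_ a b
  rw [intervalIntegrable_iff_integrableOn_Ioo_of_le zero_le_one]
  refine (integrableOn_congr_fun (fun u hu => ?_) measurableSet_Ioo).mpr
    ((intervalIntegrable_rpow' hp).1.mono_set Ioo_subset_Ioc_self)
  simp [Int.fract_eq_self.2 ⟨hu.1.le, hu.2⟩]

lemma integral_fract_rpow (hp : -1 < p) : ∫ u in (0 : ℝ)..1, Int.fract u ^ p = 1 / (p + 1) := by
  have : ∫ u in (0 : ℝ)..1, Int.fract u ^ p = ∫ u in (0 : ℝ)..1, u ^ p := by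
    rw [integral_of_le zero_le_one, integral_of_le zero_le_one, integral_Ioc_eq_integral_Ioo,
      integral_Ioc_eq_integral_Ioo]
    exact setIntegral_congr_fun measurableSet_Ioo fun u hu => by
      simp [Int.fract_eq_self.2 ⟨hu.1.le, hu.2⟩]
  rw [this, integral_rpow (Or.inl hp)]
  simp [Real.zero_rpow (by linarith : p + 1 ≠ 0)]

lemma integral_fract_mul_rpow (hn : 0 < n) (hp : -1 < p) :
    ∫ t in (0 : ℝ)..1, Int.fract (n * t) ^ p = 1 / (p + 1) := by
  have hn' : (n : ℝ) ≠ 0 := by positivity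
  have hperiod :
      ∫ u in (0 : ℝ)..n, Int.fract u ^ p = n * ∫ u in (0 : ℝ)..1, Int.fract u ^ p := by
    simpa using ((Int.fract_periodic ℝ).comp (· ^ p)).intervalIntegral_add_zsmul_eq n 0
      (intervalIntegrable_fract_rpow hp)
  rw [integral_comp_mul_left (fun u => Int.fract u ^ p) hn', mul_zero, mul_one, hperiod,
    integral_fract_rpow hp, smul_eq_mul]
  field_simp

lemma sub_kappa_rpow_eq (hn : 0 < n) (p : ℝ) :
    (fun t : ℝ => (t - kappa n t) ^ p)
      = fun t : ℝ => (n : ℝ) ^ (-p) * Int.fract (n * t) ^ p := by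
  ext t
  rw [sub_kappa_eq hn, Real.div_rpow (Int.fract_nonneg _) (Nat.cast_nonneg n),
    Real.rpow_neg (Nat.cast_nonneg n), div_eq_inv_mul]

lemma intervalIntegrable_sub_kappa_rpow (hn : 0 < n) (hp : -1 < p) :
    IntervalIntegrable (fun t => (t - kappa n t) ^ p) volume 0 1 := by
  rw [sub_kappa_rpow_eq hn]
  refine IntervalIntegrable.const_mul ?_ _
  have := (intervalIntegrable_fract_rpow hp 0 n).comp_mul_left (c := n)
  have hn' : (n : ℝ) ≠ 0 := by positivity
  simpa [hn'] using this

lemma integral_sub_kappa_rpow (hn : 0 < n) (hp : -1 < p) :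
    ∫ t in (0 : ℝ)..1, (t - kappa n t) ^ p = (n : ℝ) ^ (-p) / (p + 1) := by
  rw [sub_kappa_rpow_eq hn, intervalIntegral.integral_const_mul, integral_fract_mul_rpow hn hp,
    mul_one_div]

end Fract

lemma norm_sub_comp_kappa_le {E : Type*} [SeminormedAddCommGroup E] {f : ℝ → E} {L ρ : ℝ}
    (hL : 0 ≤ L) (hρ0 : 0 ≤ ρ) (hρ1 : ρ ≤ 1)
    (hf : ∀ s t : ℝ, s ∈ Icc (0 : ℝ) 1 → t ∈ Icc (0 : ℝ) 1 →
      ‖f t - f s‖ ≤ L * |t - s| ^ ρ)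
    {n : ℕ} (hn : 0 < n) {s t : ℝ} (hs : 0 ≤ s) (hst : s ≤ t) (ht : t ≤ 1) :
    ‖f (kappa n t) - f (kappa n s)‖ ≤ L * ((t - s) ^ ρ + (n : ℝ) ^ (-ρ)) := by
  have hκ : 0 ≤ kappa n t - kappa n s := sub_nonneg.2 (kappa_mono hst)
  have hκ' : kappa n t - kappa n s ≤ (t - s) + 1 / n := by
    linarith [kappa_le hn t, sub_kappa_lt hn s]
  calc ‖f (kappa n t) - f (kappa n s)‖
      ≤ L * |kappa n t - kappa n s| ^ ρ :=
        hf _ _ ⟨kappa_nonneg hs, (kappa_le hn s).trans (hst.trans ht)⟩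
          ⟨kappa_nonneg (hs.trans hst), (kappa_le hn t).trans ht⟩
    _ ≤ L * ((t - s) + 1 / n) ^ ρ := by
        rw [abs_of_nonneg hκ]
        gcongr
    _ ≤ L * ((t - s) ^ ρ + (1 / n : ℝ) ^ ρ) := by
        gcongr
        exact Real.rpow_add_le_add_rpow (by linarith) (by positivity) hρ0 hρ1
    _ = L * ((t - s) ^ ρ + (n : ℝ) ^ (-ρ)) := by
        rw [one_div, Real.inv_rpow (Nat.cast_nonneg n), Real.rpow_neg (Nat.cast_nonneg n)]

section Kernel

variable {a e c s t : ℝ}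

lemma continuousOn_sub_rpow (hc : 0 ≤ c) (hct : c < t) :
    ContinuousOn (fun s => (t - s) ^ e) (uIcc 0 c) := fun s hs => by
  rw [uIcc_of_le hc] at hs
  exact (continuousAt_const.sub continuousAt_id).rpow_const
    (Or.inl (sub_ne_zero.2 (hs.2.trans_lt hct).ne')) |>.continuousWithinAt

lemma integral_sub_rpow (he : e ≠ -1) (hc : 0 ≤ c) (hct : c < t) :
    ∫ s in (0 : ℝ)..c, (t - s) ^ e = (t ^ (e + 1) - (t - c) ^ (e + 1)) / (e + 1) := by
  rw [integral_comp_sub_left (fun s => s ^ e) t, sub_zero, integral_rpow]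
  refine Or.inr ⟨he, fun h => ?_⟩
  rw [uIcc_of_le (by linarith)] at h
  linarith [h.1]

lemma integral_rpow_neg_of_lt_one (ha : a < 1) :
    ∫ s in (0 : ℝ)..c, s ^ (-a) = c ^ (1 - a) / (1 - a) := by
  rw [integral_rpow (Or.inl (by linarith)), Real.zero_rpow (by linarith), neg_add_eq_sub]
  ring

lemma div_rpow_mul_sub_rpow_le (ha : 0 ≤ a) (he : e ≤ 0) (hs : 0 < s) (hst : s < t) :
    (t / s) ^ a * (t - s) ^ e ≤ 2 ^ (-e) * t ^ (a + e) * s ^ (-a) + 2 ^ a * (t - s) ^ e := by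
  have ht : 0 < t := hs.trans hst
  have h₁ : 0 ≤ 2 ^ (-e) * t ^ (a + e) * s ^ (-a) := by positivity
  have h₂ : 0 ≤ 2 ^ a * (t - s) ^ e := by have := sub_pos.2 hst; positivity
  rcases le_total s (t / 2) with hs_far | hs_near
  · calc (t / s) ^ a * (t - s) ^ e ≤ (t / s) ^ a * (t / 2) ^ e := by
          gcongr ?_ * ?_
          exact Real.rpow_le_rpow_of_nonpos (by positivity) (by linarith) he
      _ = 2 ^ (-e) * t ^ (a + e) * s ^ (-a) := by
          rw [Real.div_rpow ht.le hs.le, Real.div_rpow ht.le zero_le_two, Real.rpow_add ht,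
            Real.rpow_neg hs.le, Real.rpow_neg zero_le_two]
          field_simp
      _ ≤ _ := le_add_of_nonneg_right h₂
  · calc (t / s) ^ a * (t - s) ^ e ≤ 2 ^ a * (t - s) ^ e := by
          gcongr
          rw [div_le_iff₀ hs]
          linarith
      _ ≤ _ := le_add_of_nonneg_left h₁

lemma intervalIntegrable_div_rpow_mul_sub_rpow (ha : a < 1) (hc : 0 ≤ c) (hct : c < t) :
    IntervalIntegrable (fun s => (t / s) ^ a * (t - s) ^ e) volume 0 c := by
  have hint : IntervalIntegrable (fun s => t ^ a * s ^ (-a) * (t - s) ^ e) volume 0 c :=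
    ((intervalIntegrable_rpow' (by linarith)).const_mul _).mul_continuousOn
      (continuousOn_sub_rpow hc hct)
  refine hint.congr fun s hs => ?_
  rw [uIoc_of_le hc] at hs
  have ht : 0 < t := by linarith [hs.1, hs.2]
  rw [Real.div_rpow ht.le hs.1.le, Real.rpow_neg hs.1.le, div_eq_mul_inv]

lemma integral_div_rpow_mul_sub_rpow_le (ha0 : 0 ≤ a) (ha1 : a < 1) (he : e ≤ 0) (hc : 0 ≤ c)
    (hct : c < t) :
    ∫ s in (0 : ℝ)..c, (t / s) ^ a * (t - s) ^ e
      ≤ 2 ^ (-e) * t ^ (1 + e) / (1 - a) + 2 ^ a * ∫ s in (0 : ℝ)..c, (t - s) ^ e := by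
  have ht : 0 < t := hc.trans_lt hct
  have hpow : IntervalIntegrable (fun s => s ^ (-a)) volume 0 c :=
    intervalIntegrable_rpow' (by linarith)
  have hsub : IntervalIntegrable (fun s => (t - s) ^ e) volume 0 c :=
    (continuousOn_sub_rpow hc hct).intervalIntegrable
  calc ∫ s in (0 : ℝ)..c, (t / s) ^ a * (t - s) ^ e
      ≤ ∫ s in (0 : ℝ)..c, (2 ^ (-e) * t ^ (a + e) * s ^ (-a) + 2 ^ a * (t - s) ^ e) :=
        integral_mono_on_of_le_Ioo hc (intervalIntegrable_div_rpow_mul_sub_rpow ha1 hc hct)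
          ((hpow.const_mul _).add (hsub.const_mul _))
          fun s hs => div_rpow_mul_sub_rpow_le ha0 he hs.1 (hs.2.trans hct)
    _ = 2 ^ (-e) * t ^ (a + e) * (c ^ (1 - a) / (1 - a))
          + 2 ^ a * ∫ s in (0 : ℝ)..c, (t - s) ^ e := by
        rw [integral_add (hpow.const_mul _) (hsub.const_mul _),
          intervalIntegral.integral_const_mul, intervalIntegral.integral_const_mul,
          integral_rpow_neg_of_lt_one ha1]
    _ ≤ 2 ^ (-e) * t ^ (a + e) * (t ^ (1 - a) / (1 - a))
          + 2 ^ a * ∫ s in (0 : ℝ)..c, (t - s) ^ e := by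
        gcongr
    _ = 2 ^ (-e) * t ^ (1 + e) / (1 - a) + 2 ^ a * ∫ s in (0 : ℝ)..c, (t - s) ^ e := by
        rw [show 1 + e = (a + e) + (1 - a) by ring, Real.rpow_add ht (a + e)]
        ring

end Kernel

section Weight

variable {H ρ c t : ℝ}

lemma integral_weight_holder_le (hH0 : 1 / 2 ≤ H) (hH1 : H < 3 / 2) (hρ0 : H - 1 / 2 < ρ)
    (hρ1 : ρ ≤ H + 1 / 2) (hc : 0 ≤ c) (hct : c < t) (ht : t ≤ 1) :
    ∫ s in (0 : ℝ)..c, (t / s) ^ (H - 1 / 2) * (t - s) ^ (ρ - H - 1 / 2)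
      ≤ 2 ^ (H + 1 / 2 - ρ) / (3 / 2 - H) + 2 ^ (H - 1 / 2) / (ρ - H + 1 / 2) := by
  have ht0 : 0 ≤ t := by linarith
  have hpow : t ^ (ρ - H + 1 / 2) ≤ 1 := Real.rpow_le_one ht0 ht (by linarith)
  have hsub : ∫ s in (0 : ℝ)..c, (t - s) ^ (ρ - H - 1 / 2) ≤ 1 / (ρ - H + 1 / 2) := by
    rw [integral_sub_rpow (by linarith) hc hct, show ρ - H - 1 / 2 + 1 = ρ - H + 1 / 2 by ring]
    have : 0 ≤ (t - c) ^ (ρ - H + 1 / 2) := Real.rpow_nonneg (by linarith) _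
    gcongr <;> linarith
  calc _ ≤ 2 ^ (-(ρ - H - 1 / 2)) * t ^ (1 + (ρ - H - 1 / 2)) / (1 - (H - 1 / 2))
        + 2 ^ (H - 1 / 2) * ∫ s in (0 : ℝ)..c, (t - s) ^ (ρ - H - 1 / 2) :=
        integral_div_rpow_mul_sub_rpow_le (by linarith) (by linarith) (by linarith) hc hct
    _ ≤ 2 ^ (H + 1 / 2 - ρ) * 1 / (3 / 2 - H) + 2 ^ (H - 1 / 2) * (1 / (ρ - H + 1 / 2)) := by
        rw [show -(ρ - H - 1 / 2) = H + 1 / 2 - ρ by ring,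
          show 1 + (ρ - H - 1 / 2) = ρ - H + 1 / 2 by ring,
          show 1 - (H - 1 / 2) = 3 / 2 - H by ring]
        gcongr
    _ = _ := by ring

lemma integral_weight_singular_le (hH0 : 1 / 2 < H) (hH1 : H < 3 / 2) (hc : 0 ≤ c) (hct : c < t) :
    ∫ s in (0 : ℝ)..c, (t / s) ^ (H - 1 / 2) * (t - s) ^ (-H - 1 / 2)
      ≤ 2 ^ (H + 1 / 2) / (3 / 2 - H) * t ^ (1 / 2 - H)
        + 2 ^ (H - 1 / 2) / (H - 1 / 2) * (t - c) ^ (1 / 2 - H) := by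
  have hsub :
      ∫ s in (0 : ℝ)..c, (t - s) ^ (-H - 1 / 2) ≤ (t - c) ^ (1 / 2 - H) / (H - 1 / 2) := by
    rw [integral_sub_rpow (by linarith) hc hct, show -H - 1 / 2 + 1 = -(H - 1 / 2) by ring,
      div_neg, ← neg_div, neg_sub, show -(H - 1 / 2) = 1 / 2 - H by ring]
    have : 0 ≤ t ^ (1 / 2 - H) := Real.rpow_nonneg (by linarith) _
    gcongr
    linarith
  calc _ ≤ 2 ^ (-(-H - 1 / 2)) * t ^ (1 + (-H - 1 / 2)) / (1 - (H - 1 / 2))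
        + 2 ^ (H - 1 / 2) * ∫ s in (0 : ℝ)..c, (t - s) ^ (-H - 1 / 2) :=
        integral_div_rpow_mul_sub_rpow_le (by linarith) (by linarith) (by linarith) hc hct
    _ ≤ 2 ^ (H + 1 / 2) * t ^ (1 / 2 - H) / (3 / 2 - H)
        + 2 ^ (H - 1 / 2) * ((t - c) ^ (1 / 2 - H) / (H - 1 / 2)) := by
        rw [show -(-H - 1 / 2) = H + 1 / 2 by ring, show 1 + (-H - 1 / 2) = 1 / 2 - H by ring,
          show 1 - (H - 1 / 2) = 3 / 2 - H by ring]
        gcongr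
    _ = _ := by ring

end Weight

lemma integral_weight_norm_sub_comp_kappa_le {E : Type*} [SeminormedAddCommGroup E] {f : ℝ → E}
    {L H ρ t : ℝ} {n : ℕ} (hn : 0 < n) (hH0 : 1 / 2 < H) (hH1 : H < 3 / 2)
    (hρ0 : H - 1 / 2 < ρ) (hρ1 : ρ ≤ 1) (hL : 0 ≤ L)
    (hf : ∀ s t : ℝ, s ∈ Icc (0 : ℝ) 1 → t ∈ Icc (0 : ℝ) 1 →
      ‖f t - f s‖ ≤ L * |t - s| ^ ρ)
    (ht0 : 0 ≤ t) (ht1 : t ≤ 1) (hκt : kappa n t < t) :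
    ∫ s in (0 : ℝ)..t,
        (t / s) ^ (H - 1 / 2) * ‖f (kappa n t) - f (kappa n s)‖ * (t - s) ^ (-H - 1 / 2)
      ≤ L * ((2 ^ (H + 1 / 2 - ρ) / (3 / 2 - H) + 2 ^ (H - 1 / 2) / (ρ - H + 1 / 2))
        + 2 ^ (H + 1 / 2) / (3 / 2 - H) * t ^ (1 / 2 - H)
        + 2 ^ (H - 1 / 2) / (H - 1 / 2) * (n : ℝ) ^ (-ρ) * (t - kappa n t) ^ (1 / 2 - H)) := by
  set c := kappa n t
  have hc : 0 ≤ c := kappa_nonneg ht0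
  set F := fun s => (t / s) ^ (H - 1 / 2) * ‖f c - f (kappa n s)‖ * (t - s) ^ (-H - 1 / 2)
  have hK (e : ℝ) :
      IntervalIntegrable (fun s => (t / s) ^ (H - 1 / 2) * (t - s) ^ e) volume 0 c :=
    intervalIntegrable_div_rpow_mul_sub_rpow (by linarith) hc hκt
  have hvanish : ∫ s in (0 : ℝ)..t, F s = ∫ s in (0 : ℝ)..c, F s := by
    rw [integral_of_le ht0, integral_of_le hc]
    refine setIntegral_eq_of_subset_of_forall_sdiff_eq_zero measurableSet_Ioc
      (Ioc_subset_Ioc_right hκt.le) fun s hs => ?_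
    have hcs : c < s := lt_of_not_ge fun h => hs.2 ⟨hs.1.1, h⟩
    have hκs : kappa n s = c := kappa_eq_of_mem_Icc hn ⟨hcs.le, hs.1.2⟩
    simp [F, hκs]
  have hF : ∀ s ∈ Ioc 0 c, 0 ≤ F s ∧
      F s ≤ L * ((t / s) ^ (H - 1 / 2) * (t - s) ^ (ρ - H - 1 / 2)
        + (n : ℝ) ^ (-ρ) * ((t / s) ^ (H - 1 / 2) * (t - s) ^ (-H - 1 / 2))) := by
    intro s hs
    have hts : 0 < t - s := by linarith [hs.2]
    have hw₁ : 0 ≤ (t / s) ^ (H - 1 / 2) := Real.rpow_nonneg (div_nonneg ht0 hs.1.le) _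
    have hw₂ : 0 ≤ (t - s) ^ (-H - 1 / 2) := Real.rpow_nonneg hts.le _
    refine ⟨by positivity, ?_⟩
    calc (t / s) ^ (H - 1 / 2) * ‖f c - f (kappa n s)‖ * (t - s) ^ (-H - 1 / 2)
        ≤ (t / s) ^ (H - 1 / 2) * (L * ((t - s) ^ ρ + (n : ℝ) ^ (-ρ)))
          * (t - s) ^ (-H - 1 / 2) := by
          gcongr
          exact norm_sub_comp_kappa_le hL (by linarith) hρ1 hf hn hs.1.le (by linarith) ht1
      _ = _ := by
          rw [show ρ - H - 1 / 2 = ρ + (-H - 1 / 2) by ring, Real.rpow_add hts]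
          ring
  have hnρ : (n : ℝ) ^ (-ρ) ≤ 1 :=
    Real.rpow_le_one_of_one_le_of_nonpos (by exact_mod_cast hn) (by linarith)
  calc ∫ s in (0 : ℝ)..t, F s = ∫ s in (0 : ℝ)..c, F s := hvanish
    _ ≤ ∫ s in (0 : ℝ)..c, L * ((t / s) ^ (H - 1 / 2) * (t - s) ^ (ρ - H - 1 / 2)
          + (n : ℝ) ^ (-ρ) * ((t / s) ^ (H - 1 / 2) * (t - s) ^ (-H - 1 / 2))) :=
        intervalIntegral_mono_of_nonneg hc (ae_of_all _ fun s hs => (hF s hs).1)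
          (((hK _).add ((hK _).const_mul _)).const_mul _) (ae_of_all _ fun s hs => (hF s hs).2)
    _ = L * ((∫ s in (0 : ℝ)..c, (t / s) ^ (H - 1 / 2) * (t - s) ^ (ρ - H - 1 / 2))
          + (n : ℝ) ^ (-ρ)
            * ∫ s in (0 : ℝ)..c, (t / s) ^ (H - 1 / 2) * (t - s) ^ (-H - 1 / 2)) := by
        rw [intervalIntegral.integral_const_mul, integral_add (hK _) ((hK _).const_mul _),
          intervalIntegral.integral_const_mul]
    _ ≤ L * ((2 ^ (H + 1 / 2 - ρ) / (3 / 2 - H) + 2 ^ (H - 1 / 2) / (ρ - H + 1 / 2))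
          + (n : ℝ) ^ (-ρ) * (2 ^ (H + 1 / 2) / (3 / 2 - H) * t ^ (1 / 2 - H)
            + 2 ^ (H - 1 / 2) / (H - 1 / 2) * (t - c) ^ (1 / 2 - H))) := by
        gcongr
        · exact integral_weight_holder_le hH0.le hH1 hρ0 (by linarith) hc hκt ht1
        · exact integral_weight_singular_le hH0 hH1 hc hκt
    _ ≤ _ := by
        have : 0 < 3 / 2 - H := by linarith
        have : (n : ℝ) ^ (-ρ) * (2 ^ (H + 1 / 2) / (3 / 2 - H) * t ^ (1 / 2 - H))
            ≤ 2 ^ (H + 1 / 2) / (3 / 2 - H) * t ^ (1 / 2 - H) :=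
          mul_le_of_le_one_left (by positivity) hnρ
        refine mul_le_mul_of_nonneg_left ?_ hL
        linarith

lemma integral_majorant_le {n : ℕ} (hn : 0 < n) {H ρ : ℝ} (hH1 : H < 1)
    (hρ : H - 1 / 2 ≤ ρ) {C A B : ℝ} (hB : 0 ≤ B) :
    IntervalIntegrable (fun t =>
        C + A * t ^ (1 - 2 * H) + B * (n : ℝ) ^ (-2 * ρ) * (t - kappa n t) ^ (1 - 2 * H))
        volume 0 1 ∧
      ∫ t in (0 : ℝ)..1,
          (C + A * t ^ (1 - 2 * H) + B * (n : ℝ) ^ (-2 * ρ) * (t - kappa n t) ^ (1 - 2 * H))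
        ≤ C + (A + B) / (2 - 2 * H) := by
  have hp : -1 < 1 - 2 * H := by linarith
  have h₁ := (intervalIntegrable_rpow' hp (a := 0) (b := 1)).const_mul A
  have h₂ := (intervalIntegrable_sub_kappa_rpow hn hp).const_mul (B * (n : ℝ) ^ (-2 * ρ))
  refine ⟨(intervalIntegrable_const.add h₁).add h₂, ?_⟩
  have hn1 : (n : ℝ) ^ (-2 * ρ) * (n : ℝ) ^ (-(1 - 2 * H)) ≤ 1 := by
    rw [← Real.rpow_add (by exact_mod_cast hn)]
    exact Real.rpow_le_one_of_one_le_of_nonpos (by exact_mod_cast hn) (by linarith)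
  rw [integral_add (intervalIntegrable_const.add h₁) h₂,
    integral_add intervalIntegrable_const h₁,
    intervalIntegral.integral_const_mul, intervalIntegral.integral_const_mul,
    integral_sub_kappa_rpow hn hp, integral_rpow (Or.inl hp), intervalIntegral.integral_const,
    Real.one_rpow, Real.zero_rpow (by linarith), show 1 - 2 * H + 1 = 2 - 2 * H by ring]
  have h2H : 0 < 2 - 2 * H := by linarith
  have : B * (n : ℝ) ^ (-2 * ρ) * ((n : ℝ) ^ (-(1 - 2 * H)) / (2 - 2 * H))
      ≤ B / (2 - 2 * H) := by
    rw [← mul_div_assoc, mul_assoc]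
    gcongr
    exact mul_le_of_le_one_right hB hn1
  simp only [sub_zero, smul_eq_mul]
  rw [add_div]
  linarith [show A * (1 / (2 - 2 * H)) = A / (2 - 2 * H) by ring]

lemma sq_le_three_mul_sq_add {x L a b c : ℝ} (hx : 0 ≤ x) (h : x ≤ L * (a + b + c)) :
    x ^ 2 ≤ 3 * L ^ 2 * (a ^ 2 + b ^ 2 + c ^ 2) :=
  calc x ^ 2 ≤ (L * (a + b + c)) ^ 2 := pow_le_pow_left₀ hx h 2
    _ ≤ 3 * L ^ 2 * (a ^ 2 + b ^ 2 + c ^ 2) := by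
      nlinarith [sq_nonneg (a - b), sq_nonneg (b - c), sq_nonneg (a - c), sq_nonneg L]

lemma rpow_sq_eq {x : ℝ} (hx : 0 ≤ x) (y : ℝ) : (x ^ y) ^ 2 = x ^ (2 * y) := by
  rw [← Real.rpow_natCast, ← Real.rpow_mul hx, mul_comm]
  norm_num

theorem stmt_13_general (d : ℕ) (H ρ : ℝ)
    (hH0 : 1/2 < H) (hH1 : H < 1) (hρ0 : H - 1/2 < ρ) (hρ1 : ρ ≤ 1) :
    ∃ N : ℝ, 0 < N ∧
      ∀ (f : ℝ → EuclideanSpace ℝ (Fin d)) (L : ℝ), 0 ≤ L →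
      (∀ s t : ℝ, s ∈ Set.Icc (0:ℝ) 1 → t ∈ Set.Icc (0:ℝ) 1 →
        ‖f t - f s‖ ≤ L * |t - s| ^ ρ) →
      ∀ n : ℕ, 1 ≤ n →
        (∫ t in (0:ℝ)..1,
          (∫ s in (0:ℝ)..t,
            (t/s) ^ (H - 1/2) * ‖f (kappa n t) - f (kappa n s)‖
              * (t - s) ^ (-H - 1/2)) ^ 2)
          ≤ N * L ^ 2 := by
  set C := 2 ^ (H + 1 / 2 - ρ) / (3 / 2 - H) + 2 ^ (H - 1 / 2) / (ρ - H + 1 / 2)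
  set A := 2 ^ (H + 1 / 2) / (3 / 2 - H)
  set B := 2 ^ (H - 1 / 2) / (H - 1 / 2)
  have h2H : 0 < 2 - 2 * H := by linarith
  have hB : 0 < B := div_pos (by positivity) (by linarith)
  refine ⟨3 * (C ^ 2 + (A ^ 2 + B ^ 2) / (2 - 2 * H)), by positivity, fun f L hL hf n hn => ?_⟩
  obtain ⟨hGint, hG⟩ :=
    integral_majorant_le hn hH1 hρ0.le (C := C ^ 2) (A := A ^ 2) (sq_nonneg B)
  refine (intervalIntegral_mono_of_nonneg zero_le_one (ae_of_all _ fun _ _ => sq_nonneg _)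
    (hGint.const_mul (3 * L ^ 2)) ?_).trans ?_
  · filter_upwards [ae_kappa_lt hn] with t hκt ht
    have key := sq_le_three_mul_sq_add ?_ (integral_weight_norm_sub_comp_kappa_le hn hH0
      (by linarith) hρ0 hρ1 hL hf ht.1.le ht.2 hκt)
    · rwa [mul_pow, mul_pow, mul_pow, rpow_sq_eq ht.1.le, rpow_sq_eq (Nat.cast_nonneg n),
        rpow_sq_eq (sub_nonneg.2 (kappa_le hn t)), show 2 * (1 / 2 - H) = 1 - 2 * H by ring,
        show 2 * -ρ = -2 * ρ by ring] at key
    · refine integral_nonneg ht.1.le fun s hs => ?_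
      have := sub_nonneg.2 hs.2
      have := div_nonneg ht.1.le hs.1
      positivity
  · rw [intervalIntegral.integral_const_mul]
    linarith [mul_le_mul_of_nonneg_left hG (by positivity : (0 : ℝ) ≤ 3 * L ^ 2)]

/-- Lemma 3.12, bound (3.18): for `H ∈ (1/2,1)` and `ρ ∈ (H-1/2, 1]` there is
`N = N(H,ρ)` such that for every `ρ`-Hölder function `f : [0,1] → ℝ^d`
(with Hölder constant `L`) and every `n ∈ ℕ`,
`∫_0^1 (∫_0^t (t/s)^{H-1/2} |f_{κ_n(t)} - f_{κ_n(s)}| (t-s)^{-H-1/2} ds)² dt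
  ≤ N [f]_{C^ρ}²`. -/
theorem stmt_13 (d : ℕ) (hd : 1 ≤ d) (H ρ : ℝ)
    (hH0 : 1/2 < H) (hH1 : H < 1) (hρ0 : H - 1/2 < ρ) (hρ1 : ρ ≤ 1) :
    ∃ N : ℝ, 0 < N ∧
      ∀ (f : ℝ → EuclideanSpace ℝ (Fin d)) (L : ℝ), 0 ≤ L →
      (∀ s t : ℝ, s ∈ Set.Icc (0:ℝ) 1 → t ∈ Set.Icc (0:ℝ) 1 →
        ‖f t - f s‖ ≤ L * |t - s| ^ ρ) →
      ∀ n : ℕ, 1 ≤ n →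
        (∫ t in (0:ℝ)..1,
          (∫ s in (0:ℝ)..t,
            (t/s) ^ (H - 1/2) * ‖f (kappa n t) - f (kappa n s)‖
              * (t - s) ^ (-H - 1/2)) ^ 2)
          ≤ N * L ^ 2 :=
  stmt_13_general d H ρ hH0 hH1 hρ0 hρ1
end

section
/- Let H ∈ (1/2,1) and ρ ∈ (H − 1/2, 1]. Then there exists a constant N = N(H, ρ) such that for every function f : [0,1] → ℝ^d with [f]_{C^ρ} := sup_{s ≠ t ∈ [0,1]} |f_t − f_s|/|t−s|^ρ < ∞, ∫_0^1 ( ∫_0^t (t/s)^{H−1/2}·|f_t − f_s|·(t−s)^{−H−1/2} ds )² dt ≤ N·[f]_{C^ρ}². -/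
/-!
For `0 < s < t ≤ 1` the Hölder bound turns the integrand into `L (t/s)^a (t-s)^b` with
`a = H - 1/2 ∈ (0,1)` and `b = ρ - H - 1/2 ∈ (-1,0]`. Splitting at `s = t/2`, one of the two
factors is bounded by a constant (`(t-s)^b ≤ (t/2)^b`, resp. `(t/s)^a ≤ 2^a`) while the other is
integrable at its singularity, so the inner integral is at most `L K t^(b+1) ≤ L K`; squaring and
integrating over `t ∈ [0,1]` gives the bound with `N = K²`.
-/

open Set MeasureTheory intervalIntegral

namespace intervalIntegral

theorem integral_mono_on_of_nonneg {f g : ℝ → ℝ} {a b : ℝ} (hab : a ≤ b)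
    (hf : ∀ x ∈ Ioo a b, 0 ≤ f x) (hg : IntervalIntegrable g volume a b)
    (h : ∀ x ∈ Ioo a b, f x ≤ g x) :
    ∫ x in a..b, f x ≤ ∫ x in a..b, g x := by
  simp only [integral_of_le hab, integral_Ioc_eq_integral_Ioo]
  exact integral_mono_of_nonneg (ae_restrict_of_forall_mem measurableSet_Ioo hf)
    (hg.1.mono_set Ioo_subset_Ioc_self) (ae_restrict_of_forall_mem measurableSet_Ioo h)

end intervalIntegral

namespace Real

/-- The constant `K` with `∫₀ᵗ (t/s)^a (t-s)^b ds ≤ K t^(b+1)` for `0 ≤ a < 1`, `-1 < b ≤ 0`. -/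
noncomputable def kernelBound (a b : ℝ) : ℝ := 2 ^ (-b) / (1 - a) + 2 ^ a / (b + 1)

theorem kernelBound_pos {a b : ℝ} (ha : a < 1) (hb : -1 < b) : 0 < kernelBound a b := by
  have : 0 < 1 - a := by linarith
  have : 0 < b + 1 := by linarith
  unfold kernelBound
  positivity

theorem div_rpow_mul_sub_rpow_le {a b s t : ℝ} (ha : 0 ≤ a) (hb : b ≤ 0) (hs : 0 < s)
    (hst : s < t) :
    (t / s) ^ a * (t - s) ^ b ≤ t ^ a * (t / 2) ^ b * s ^ (-a) + 2 ^ a * (t - s) ^ b := by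
  have ht : 0 < t := hs.trans hst
  have hts : 0 < t - s := by linarith
  rcases le_or_gt s (t / 2) with hs2 | hs2
  · have hsub : (t - s) ^ b ≤ (t / 2) ^ b := rpow_le_rpow_of_nonpos (by linarith) (by linarith) hb
    have hdiv : (t / s) ^ a = t ^ a * s ^ (-a) := by
      rw [div_rpow ht.le hs.le, rpow_neg hs.le, div_eq_mul_inv]
    calc (t / s) ^ a * (t - s) ^ b ≤ t ^ a * s ^ (-a) * (t / 2) ^ b := by
          rw [hdiv]; gcongr
      _ ≤ t ^ a * (t / 2) ^ b * s ^ (-a) + 2 ^ a * (t - s) ^ b := by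
          nlinarith [rpow_nonneg (zero_le_two (α := ℝ)) a, rpow_nonneg hts.le b]
  · have hdiv : (t / s) ^ a ≤ 2 ^ a :=
      rpow_le_rpow (by positivity) ((div_le_iff₀ hs).2 (by linarith)) ha
    calc (t / s) ^ a * (t - s) ^ b ≤ 2 ^ a * (t - s) ^ b := by gcongr
      _ ≤ t ^ a * (t / 2) ^ b * s ^ (-a) + 2 ^ a * (t - s) ^ b := by
          have : 0 ≤ t ^ a * (t / 2) ^ b * s ^ (-a) := by positivity
          linarith

section KernelMajorant

variable {a b t : ℝ}

theorem intervalIntegrable_sub_rpow (hb : -1 < b) :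
    IntervalIntegrable (fun s ↦ (t - s) ^ b) volume 0 t := by
  simpa using ((intervalIntegrable_rpow' (a := 0) (b := t) hb).comp_sub_left t).symm

theorem intervalIntegrable_kernelMajorant (ha : a < 1) (hb : -1 < b) :
    IntervalIntegrable (fun s ↦ t ^ a * (t / 2) ^ b * s ^ (-a) + 2 ^ a * (t - s) ^ b)
      volume 0 t :=
  ((intervalIntegrable_rpow' (by linarith)).const_mul _).add
    ((intervalIntegrable_sub_rpow hb).const_mul _)

theorem integral_kernelMajorant (ha : a < 1) (hb : -1 < b) (ht : 0 < t) :
    ∫ s in 0..t, (t ^ a * (t / 2) ^ b * s ^ (-a) + 2 ^ a * (t - s) ^ b)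
      = kernelBound a b * t ^ (b + 1) := by
  have h1a : 0 < 1 - a := by linarith
  have hb1 : 0 < b + 1 := by linarith
  have hpow : ∫ s in 0..t, s ^ (-a) = t ^ (1 - a) / (1 - a) := by
    rw [integral_rpow (Or.inl (by linarith)), zero_rpow (by linarith),
      show -a + 1 = 1 - a by ring, sub_zero]
  have hsub : ∫ s in 0..t, (t - s) ^ b = t ^ (b + 1) / (b + 1) := by
    rw [integral_comp_sub_left (fun u ↦ u ^ b) t, sub_self, sub_zero,
      integral_rpow (Or.inl hb), zero_rpow hb1.ne', sub_zero]
  have hexp : t ^ a * (t / 2) ^ b * t ^ (1 - a) = 2 ^ (-b) * t ^ (b + 1) := by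
    rw [div_rpow ht.le zero_le_two, rpow_neg zero_le_two, rpow_add ht, rpow_one,
      show t ^ (1 - a) = t / t ^ a by rw [rpow_sub ht, rpow_one]]
    field_simp
  rw [integral_add ((intervalIntegrable_rpow' (by linarith)).const_mul _)
      ((intervalIntegrable_sub_rpow hb).const_mul _),
    intervalIntegral.integral_const_mul, intervalIntegral.integral_const_mul, hpow, hsub, kernelBound]
  rw [mul_div_assoc', hexp]
  ring

end KernelMajorant

end Real

open Real

theorem integral_div_rpow_mul_norm_sub_le {E : Type*} [NormedAddCommGroup E] {f : ℝ → E}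
    {L a ρ t : ℝ} (ha0 : 0 ≤ a) (ha1 : a < 1) (haρ : a < ρ) (hρa : ρ ≤ a + 1) (hL : 0 ≤ L)
    (ht : 0 < t) (hf : ∀ s ∈ Ioo 0 t, ‖f t - f s‖ ≤ L * (t - s) ^ ρ) :
    ∫ s in 0..t, (t / s) ^ a * ‖f t - f s‖ * (t - s) ^ (-a - 1)
      ≤ L * kernelBound a (ρ - a - 1) * t ^ (ρ - a) := by
  set b := ρ - a - 1
  have hb0 : b ≤ 0 := by linarith
  have hb1 : -1 < b := by linarith
  have hpointwise : ∀ s ∈ Ioo 0 t, (t / s) ^ a * ‖f t - f s‖ * (t - s) ^ (-a - 1)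
      ≤ L * (t ^ a * (t / 2) ^ b * s ^ (-a) + 2 ^ a * (t - s) ^ b) := by
    intro s ⟨hs, hst⟩
    have hts : 0 < t - s := by linarith
    calc (t / s) ^ a * ‖f t - f s‖ * (t - s) ^ (-a - 1)
        ≤ (t / s) ^ a * (L * (t - s) ^ ρ) * (t - s) ^ (-a - 1) := by gcongr; exact hf s ⟨hs, hst⟩
      _ = L * ((t / s) ^ a * (t - s) ^ b) := by
          rw [show b = ρ + (-a - 1) by ring, rpow_add hts]; ring
      _ ≤ L * (t ^ a * (t / 2) ^ b * s ^ (-a) + 2 ^ a * (t - s) ^ b) := by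
          gcongr; exact div_rpow_mul_sub_rpow_le ha0 hb0 hs hst
  have hnonneg : ∀ s ∈ Ioo 0 t, 0 ≤ (t / s) ^ a * ‖f t - f s‖ * (t - s) ^ (-a - 1) := by
    intro s ⟨hs, hst⟩
    have : 0 < t - s := by linarith
    positivity
  calc ∫ s in 0..t, (t / s) ^ a * ‖f t - f s‖ * (t - s) ^ (-a - 1)
      ≤ ∫ s in 0..t, L * (t ^ a * (t / 2) ^ b * s ^ (-a) + 2 ^ a * (t - s) ^ b) :=
        integral_mono_on_of_nonneg ht.le hnonneg
          ((intervalIntegrable_kernelMajorant ha1 hb1).const_mul L) hpointwise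
    _ = L * kernelBound a b * t ^ (ρ - a) := by
        rw [intervalIntegral.integral_const_mul, integral_kernelMajorant ha1 hb1 ht,
          show b + 1 = ρ - a by ring, mul_assoc]

theorem stmt_14_general (d : ℕ) (H ρ : ℝ)
    (hH0 : 1/2 < H) (hH1 : H < 1) (hρ0 : H - 1/2 < ρ) (hρ1 : ρ ≤ 1) :
    ∃ N : ℝ, 0 < N ∧
      ∀ (f : ℝ → EuclideanSpace ℝ (Fin d)) (L : ℝ), 0 ≤ L →
      (∀ s t : ℝ, s ∈ Set.Icc (0:ℝ) 1 → t ∈ Set.Icc (0:ℝ) 1 →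
        ‖f t - f s‖ ≤ L * |t - s| ^ ρ) →
        (∫ t in (0:ℝ)..1,
          (∫ s in (0:ℝ)..t,
            (t/s) ^ (H - 1/2) * ‖f t - f s‖ * (t - s) ^ (-H - 1/2)) ^ 2)
          ≤ N * L ^ 2 := by
  have ha0 : 0 ≤ H - 1/2 := by linarith
  have ha1 : H - 1/2 < 1 := by linarith
  have hρa : ρ ≤ H - 1/2 + 1 := by linarith
  set K := kernelBound (H - 1/2) (ρ - (H - 1/2) - 1)
  refine ⟨K ^ 2, pow_pos (kernelBound_pos ha1 (by linarith)) 2, fun f L hL hf ↦ ?_⟩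
  have hinner : ∀ t ∈ Ioo (0:ℝ) 1,
      0 ≤ ∫ s in (0:ℝ)..t, (t/s) ^ (H - 1/2) * ‖f t - f s‖ * (t - s) ^ (-H - 1/2) ∧
      ∫ s in (0:ℝ)..t, (t/s) ^ (H - 1/2) * ‖f t - f s‖ * (t - s) ^ (-H - 1/2) ≤ L * K := by
    intro t ⟨ht0, ht1⟩
    have hbound := integral_div_rpow_mul_norm_sub_le (f := f) ha0 ha1 hρ0 hρa hL ht0
      fun s ⟨hs, hst⟩ ↦ by
        simpa [abs_of_pos (sub_pos.2 hst)] using hf s t ⟨hs.le, by linarith⟩ ⟨ht0.le, ht1.le⟩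
    rw [show -(H - 1/2) - 1 = -H - 1/2 by ring] at hbound
    refine ⟨integral_nonneg ht0.le fun s ⟨hs, hst⟩ ↦ ?_, hbound.trans ?_⟩
    · have : 0 ≤ t - s := by linarith
      positivity
    · have : t ^ (ρ - (H - 1/2)) ≤ 1 := rpow_le_one ht0.le ht1.le (by linarith)
      have : 0 ≤ L * K := mul_nonneg hL (kernelBound_pos ha1 (by linarith)).le
      nlinarith
  calc (∫ t in (0:ℝ)..1,
          (∫ s in (0:ℝ)..t, (t/s) ^ (H - 1/2) * ‖f t - f s‖ * (t - s) ^ (-H - 1/2)) ^ 2)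
      ≤ ∫ t in (0:ℝ)..1, (L * K) ^ 2 :=
        integral_mono_on_of_nonneg zero_le_one (fun _ _ ↦ sq_nonneg _) intervalIntegrable_const
          fun t ht ↦ pow_le_pow_left₀ (hinner t ht).1 (hinner t ht).2 2
    _ = K ^ 2 * L ^ 2 := by simp only [intervalIntegral.integral_const, sub_zero, one_smul]; ring

/-- Lemma 3.12, bound (3.19): for `H ∈ (1/2,1)` and `ρ ∈ (H-1/2, 1]` there is
`N = N(H,ρ)` such that for every `ρ`-Hölder function `f : [0,1] → ℝ^d`
(with Hölder constant `L`),
`∫_0^1 (∫_0^t (t/s)^{H-1/2} |f_t - f_s| (t-s)^{-H-1/2} ds)² dt ≤ N [f]_{C^ρ}²`. -/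
theorem stmt_14 (d : ℕ) (hd : 1 ≤ d) (H ρ : ℝ)
    (hH0 : 1/2 < H) (hH1 : H < 1) (hρ0 : H - 1/2 < ρ) (hρ1 : ρ ≤ 1) :
    ∃ N : ℝ, 0 < N ∧
      ∀ (f : ℝ → EuclideanSpace ℝ (Fin d)) (L : ℝ), 0 ≤ L →
      (∀ s t : ℝ, s ∈ Set.Icc (0:ℝ) 1 → t ∈ Set.Icc (0:ℝ) 1 →
        ‖f t - f s‖ ≤ L * |t - s| ^ ρ) →
        (∫ t in (0:ℝ)..1,
          (∫ s in (0:ℝ)..t,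
            (t/s) ^ (H - 1/2) * ‖f t - f s‖ * (t - s) ^ (-H - 1/2)) ^ 2)
          ≤ N * L ^ 2 :=
  stmt_14_general d H ρ hH0 hH1 hρ0 hρ1
end

section
/- Let d ≥ 1, j ≥ 1, p ≥ 1 and λ > 0. For i = 1,…,j let A_i be invertible d×d real matrices and let σ_i be d×d real matrices with σ_i σ_i^T ⪰ λ·I_d. Define M := (1/j)·Σ_{i=1}^j (A_i σ_i)(A_i σ_i)^T. Then M is invertible and ‖M^{−1}‖^p ≤ λ^{−p}·(1/j)·Σ_{i=1}^j ‖A_i^{−1}‖^{2p}, where ‖·‖ denotes the operator norm. -/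
/-!
Conjugating `σσᵀ ⪰ λ` by `A` gives `(Aσ)(Aσ)ᵀ ⪰ λ AAᵀ ⪰ λ ‖A⁻¹‖⁻² I`, the last step because
`|x| ≤ ‖A⁻¹‖ |Aᵀx|`. Averaging, `M ⪰ λh I` with `h` the mean of the `‖A_i⁻¹‖⁻²`, so `M` is
invertible with `‖M⁻¹‖ ≤ (λh)⁻¹`. Finally `h⁻¹` is at most the mean of the `‖A_i⁻¹‖²`
(harmonic-arithmetic mean inequality), and by Jensen the `p`-th power of that mean is at most
the mean of the `‖A_i⁻¹‖^{2p}`.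
-/

open Matrix

/-- The operator (Euclidean) norm of a `d × d` real matrix. -/
noncomputable def opNorm {d : ℕ} (M : Matrix (Fin d) (Fin d) ℝ) : ℝ :=
  ‖(Matrix.toEuclideanCLM (𝕜 := ℝ) M :
      EuclideanSpace ℝ (Fin d) →L[ℝ] EuclideanSpace ℝ (Fin d))‖

open scoped Matrix.Norms.L2Operator RealInnerProductSpace

theorem opNorm_eq_norm {d : ℕ} (M : Matrix (Fin d) (Fin d) ℝ) : opNorm M = ‖M‖ := rfl

namespace Matrix

variable {n : Type*} [DecidableEq n]

theorem posSemidef_smul_sum_sub_smul_one {ι : Type*} (s : Finset ι) {X : ι → Matrix n n ℝ}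
    {c : ι → ℝ} {w : ℝ} (hw : 0 ≤ w) (h : ∀ i ∈ s, (X i - c i • 1).PosSemidef) :
    (w • ∑ i ∈ s, X i - (w * ∑ i ∈ s, c i) • 1).PosSemidef := by
  convert (posSemidef_sum s h).smul hw using 1
  simp only [Finset.sum_sub_distrib, Finset.sum_smul, smul_sub, mul_smul]

variable [Fintype n]

theorem posSemidef_sub_smul_one_iff {N : Matrix n n ℝ} (hN : N.IsHermitian) (c : ℝ) :
    (N - c • 1).PosSemidef ↔
      ∀ x : EuclideanSpace ℝ n, c * ‖x‖ ^ 2 ≤ ⟪x, toEuclideanCLM (𝕜 := ℝ) N x⟫ := by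
  rw [posSemidef_iff_dotProduct_mulVec,
    and_iff_right (hN.sub (isHermitian_one.smul (IsSelfAdjoint.all c)))]
  refine (EuclideanSpace.equiv n ℝ).symm.forall_congr fun x => ?_
  simp only [← real_inner_self_eq_norm_sq, inner_toEuclideanCLM,
    star_trivial, sub_mulVec, dotProduct_sub, smul_mulVec,
    one_mulVec, dotProduct_smul, smul_eq_mul, sub_nonneg]
  rfl

theorem posSemidef_mul_transpose_sub_smul_one {A : Matrix n n ℝ} (hA : IsUnit A) :
    (A * Aᵀ - (‖A⁻¹‖ ^ 2)⁻¹ • 1).PosSemidef := by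
  have hAt : A * Aᵀ = A * Aᴴ := by rw [conjTranspose_eq_transpose_of_trivial]
  rw [posSemidef_sub_smul_one_iff (hAt ▸ isHermitian_mul_conjTranspose_self A)]
  intro x
  set y := toEuclideanCLM (𝕜 := ℝ) Aᵀ x
  have hinner : ⟪x, toEuclideanCLM (𝕜 := ℝ) (A * Aᵀ) x⟫ = ‖y‖ ^ 2 := by
    rw [inner_toEuclideanCLM, ← mulVec_mulVec, dotProduct_mulVec, ← mulVec_transpose,
      ← real_inner_self_eq_norm_sq]
    rfl
  have hx : ‖x‖ ≤ ‖A⁻¹‖ * ‖y‖ := by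
    have hxy : toEuclideanCLM (𝕜 := ℝ) (A⁻¹)ᵀ y = x := by
      rw [← mul_apply_eq_comp, ← map_mul, ← transpose_mul, mul_nonsing_inv _
        ((isUnit_iff_isUnit_det A).1 hA), transpose_one, map_one, one_apply_eq_self]
    calc ‖x‖ = ‖toEuclideanCLM (𝕜 := ℝ) (A⁻¹)ᵀ y‖ := by rw [hxy]
      _ ≤ ‖(A⁻¹)ᵀ‖ * ‖y‖ := ContinuousLinearMap.le_opNorm _ _
      _ = ‖A⁻¹‖ * ‖y‖ := by
        rw [← conjTranspose_eq_transpose_of_trivial, l2_opNorm_conjTranspose]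
  rw [hinner]
  rcases (sq_nonneg ‖A⁻¹‖).eq_or_lt with h0 | hpos
  · simp [← h0]
  · rw [inv_mul_le_iff₀ hpos, ← mul_pow]
    gcongr

theorem posSemidef_mul_mul_transpose_sub_smul_one {A σ : Matrix n n ℝ} {c : ℝ} (hA : IsUnit A)
    (hc : 0 ≤ c) (hσ : (σ * σᵀ - c • 1).PosSemidef) :
    (A * σ * (A * σ)ᵀ - (c * (‖A⁻¹‖ ^ 2)⁻¹) • 1).PosSemidef := by
  have hconj : (A * (σ * σᵀ - c • 1) * Aᵀ).PosSemidef := by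
    simpa only [conjTranspose_eq_transpose_of_trivial] using hσ.mul_mul_conjTranspose_same A
  convert hconj.add ((posSemidef_mul_transpose_sub_smul_one hA).smul hc) using 1
  simp only [transpose_mul, Matrix.mul_sub, Matrix.sub_mul, smul_sub, mul_smul, Matrix.mul_assoc,
    Matrix.mul_smul, Matrix.smul_mul, Matrix.mul_one]
  abel

theorem isUnit_and_norm_inv_le_of_posSemidef_sub_smul_one {N : Matrix n n ℝ} {μ : ℝ}
    (hμ : 0 < μ) (h : (N - μ • 1).PosSemidef) : IsUnit N ∧ ‖N⁻¹‖ ≤ μ⁻¹ := by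
  have hN : N.IsHermitian := by
    simpa using h.isHermitian.add (isHermitian_one.smul (IsSelfAdjoint.all μ))
  set T := toEuclideanCLM (𝕜 := ℝ) N
  let c : NNReal := ⟨μ, hμ.le⟩
  have hc : 0 < c := hμ
  have hcoercive : ∀ x, ‖x‖ ^ 2 * c ≤ ‖⟪T x, x⟫‖ := fun x => by
    rw [mul_comm, real_inner_comm, Real.norm_eq_abs]
    exact ((posSemidef_sub_smul_one_iff hN μ).1 h x).trans (le_abs_self _)
  have hanti := ContinuousLinearMap.antilipschitz_of_forall_le_inner_map T hc hcoercive
  have hunit : IsUnit N := (isUnit_map_iff toEuclideanCLM N).1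
    (ContinuousLinearMap.isUnit_of_forall_le_norm_inner_map T hc hcoercive)
  refine ⟨hunit, ContinuousLinearMap.opNorm_le_bound _ (by positivity) fun y => ?_⟩
  have hy : T (toEuclideanCLM (𝕜 := ℝ) N⁻¹ y) = y := by
    rw [← mul_apply_eq_comp, ← map_mul, mul_nonsing_inv _ ((isUnit_iff_isUnit_det N).1 hunit),
      map_one, one_apply_eq_self]
  calc ‖toEuclideanCLM (𝕜 := ℝ) N⁻¹ y‖ ≤ c⁻¹ * ‖T (toEuclideanCLM (𝕜 := ℝ) N⁻¹ y)‖ :=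
        T.bound_of_antilipschitz hanti _
    _ = μ⁻¹ * ‖y‖ := by rw [hy]; rfl

end Matrix

theorem Real.inv_sum_mul_inv_rpow_le_sum_mul_rpow {ι : Type*} (s : Finset ι) {w b : ι → ℝ}
    (hw : ∀ i ∈ s, 0 ≤ w i) (hw' : ∑ i ∈ s, w i = 1) (hb : ∀ i ∈ s, 0 < b i) {p : ℝ}
    (hp : 1 ≤ p) : (∑ i ∈ s, w i * (b i)⁻¹)⁻¹ ^ p ≤ ∑ i ∈ s, w i * b i ^ p := by
  obtain ⟨i, hi, hwi⟩ := Finset.exists_ne_zero_of_sum_ne_zero (hw'.trans_ne one_ne_zero)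
  have hmean_pos : 0 < ∑ i ∈ s, w i * b i :=
    Finset.sum_pos' (fun i hi => mul_nonneg (hw i hi) (hb i hi).le)
      ⟨i, hi, mul_pos ((hw i hi).lt_of_ne' hwi) (hb i hi)⟩
  have hjensen : (∑ i ∈ s, w i * b i)⁻¹ ≤ ∑ i ∈ s, w i * (b i)⁻¹ := by
    simpa only [_root_.zpow_neg_one, smul_eq_mul] using (convexOn_zpow (-1)).map_sum_le hw hw' hb
  calc (∑ i ∈ s, w i * (b i)⁻¹)⁻¹ ^ p ≤ (∑ i ∈ s, w i * b i) ^ p := by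
        refine Real.rpow_le_rpow ?_ (inv_le_of_inv_le₀ hmean_pos hjensen) (by linarith)
        exact (inv_pos.2 ((inv_pos.2 hmean_pos).trans_le hjensen)).le
    _ ≤ ∑ i ∈ s, w i * b i ^ p :=
        Real.rpow_arith_mean_le_arith_mean_rpow s w b hw hw' (fun i hi => (hb i hi).le) hp

/-- The linear-algebra step (4.15) from the proof of Lemma 4.2: if `A_i` are
invertible `d × d` matrices and `σ_i σ_iᵀ ⪰ λ I`, then the Malliavin-type
matrix `M = (1/j) Σ_i (A_i σ_i)(A_i σ_i)ᵀ` is invertible and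
`‖M⁻¹‖^p ≤ λ^{-p} (1/j) Σ_i ‖A_i⁻¹‖^{2p}`. -/
theorem stmt_19 (d j : ℕ) (hd : 1 ≤ d) (hj : 1 ≤ j) (p lam : ℝ)
    (hp : 1 ≤ p) (hlam : 0 < lam)
    (A s : Fin j → Matrix (Fin d) (Fin d) ℝ)
    (hA : ∀ i, IsUnit (A i))
    (hs : ∀ i, Matrix.PosSemidef (s i * (s i)ᵀ - lam • (1 : Matrix (Fin d) (Fin d) ℝ))) :
    IsUnit ((j : ℝ)⁻¹ • ∑ i, (A i * s i) * (A i * s i)ᵀ) ∧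
    opNorm (((j : ℝ)⁻¹ • ∑ i, (A i * s i) * (A i * s i)ᵀ)⁻¹) ^ p
      ≤ lam ^ (-p) * ((j : ℝ)⁻¹ * ∑ i, opNorm ((A i)⁻¹) ^ (2 * p)) := by
  simp only [opNorm_eq_norm]
  have : Nonempty (Fin d) := ⟨⟨0, hd⟩⟩
  have : Nonempty (Fin j) := ⟨⟨0, hj⟩⟩
  have hj_pos : (0 : ℝ) < j := by exact_mod_cast hj
  have hnorm_pos (i : Fin j) : 0 < ‖(A i)⁻¹‖ :=
    norm_pos_iff.2 (isUnit_nonsing_inv_iff.2 (hA i)).ne_zero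
  set h := (j : ℝ)⁻¹ * ∑ i, (‖(A i)⁻¹‖ ^ 2)⁻¹
  have hh : 0 < h := mul_pos (inv_pos.2 hj_pos)
    (Finset.sum_pos (fun i _ => by positivity [hnorm_pos i]) Finset.univ_nonempty)
  have hM := posSemidef_smul_sum_sub_smul_one Finset.univ (inv_nonneg.2 hj_pos.le)
    fun i _ => posSemidef_mul_mul_transpose_sub_smul_one (hA i) hlam.le (hs i)
  rw [← Finset.mul_sum, mul_left_comm] at hM
  obtain ⟨hunit, hinv⟩ := isUnit_and_norm_inv_le_of_posSemidef_sub_smul_one (mul_pos hlam hh) hM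
  refine ⟨hunit, ?_⟩
  have hweights : ∑ _i : Fin j, (j : ℝ)⁻¹ = 1 := by simp [hj_pos.ne']
  calc ‖_‖ ^ p ≤ (lam * h)⁻¹ ^ p := Real.rpow_le_rpow (norm_nonneg _) hinv (by linarith)
    _ = lam ^ (-p) * h⁻¹ ^ p := by
      rw [mul_inv, Real.mul_rpow (by positivity) (by positivity), Real.inv_rpow hlam.le,
        Real.rpow_neg hlam.le]
    _ ≤ lam ^ (-p) * ((j : ℝ)⁻¹ * ∑ i, (‖(A i)⁻¹‖ ^ 2) ^ p) := by
      gcongr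
      simpa only [h, Finset.mul_sum] using Real.inv_sum_mul_inv_rpow_le_sum_mul_rpow Finset.univ
        (fun _ _ => (inv_nonneg.2 hj_pos.le)) hweights (fun i _ => by positivity [hnorm_pos i]) hp
    _ = lam ^ (-p) * ((j : ℝ)⁻¹ * ∑ i, ‖(A i)⁻¹‖ ^ (2 * p)) := by
      simp_rw [← Real.rpow_natCast, ← Real.rpow_mul (norm_nonneg _)]
      norm_num
end
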